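/- For every m ≥ 1 and c ≥ 1, the treewidth of the hardware graph F(m,c) is at least cm: cm ≤ τ(F(m,c)). -/

import Mathlib

open SimpleGraph

/-- A tree decomposition of `G` with tree `T` and bags `B`. -/
def IsTreeDecomp {V I : Type} (G : SimpleGraph V) (T : SimpleGraph I)
    (B : I → Finset V) : Prop :=
  T.IsTree ∧
  (∀ v : V, ∃ i : I, v ∈ B i) ∧
  (∀ u v : V, G.Adj u v → ∃ i : I, u ∈ B i ∧ v ∈ B i) ∧
  (∀ v : V, (T.induce {i : I | v ∈ B i}).Connected)

/-- The treewidth of `G`: the least `k` such that `G` has a tree decomposition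
all of whose bags have at most `k + 1` vertices (i.e. width at most `k`). -/
noncomputable def treewidth {V : Type} (G : SimpleGraph V) : ℕ :=
  sInf {k : ℕ | ∃ (I : Type) (T : SimpleGraph I) (B : I → Finset V),
    IsTreeDecomp G T B ∧ ∀ i : I, (B i).card ≤ k + 1}

/-- `H` is a minor of `G`: branch sets are nonempty (connectedness includes
nonemptiness), induce connected subgraphs, are pairwise disjoint, and every
edge of `H` is realized by an edge of `G` between the corresponding branch sets. -/
def IsMinor {V W : Type} (H : SimpleGraph V) (G : SimpleGraph W) : Prop :=
  ∃ φ : V → Set W,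
    (∀ v : V, (G.induce (φ v)).Connected) ∧
    (∀ u v : V, u ≠ v → Disjoint (φ u) (φ v)) ∧
    (∀ u v : V, H.Adj u v → ∃ a ∈ φ u, ∃ b ∈ φ v, G.Adj a b)

/-- The `n × m` two-dimensional grid graph: vertices `(i, j)` are adjacent iff
they differ by exactly 1 in one coordinate and agree in the other. -/
def gridGraph (n m : ℕ) : SimpleGraph (Fin n × Fin m) :=
  SimpleGraph.fromRel (fun p q =>
    (p.1 = q.1 ∧ p.2.val + 1 = q.2.val) ∨ (p.2 = q.2 ∧ p.1.val + 1 = q.1.val))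

/-- The hardware graph `F(m, c)`: an `m × m` grid of `K_{c,c}` unit cells.
A vertex `(a, b, d)` lies in cell `(a, b)`; it is on the left half if `d < c`
and the right half otherwise.  Left and right halves of a cell are completely
joined; left-half vertices are joined to their images in the cell directly
below; right-half vertices are joined to their images in the cell to the right. -/
def hardwareGraph (m c : ℕ) : SimpleGraph (Fin m × Fin m × Fin (2 * c)) :=
  SimpleGraph.fromRel (fun x y =>
    (x.1 = y.1 ∧ x.2.1 = y.2.1 ∧ x.2.2.val < c ∧ c ≤ y.2.2.val) ∨
    (x.2.1 = y.2.1 ∧ x.2.2 = y.2.2 ∧ x.2.2.val < c ∧ x.1.val + 1 = y.1.val) ∨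
    (x.1 = y.1 ∧ x.2.2 = y.2.2 ∧ c ≤ x.2.2.val ∧ x.2.1.val + 1 = y.2.1.val))

/-!
For each `j < m` and `t < c`, the `t`-th left-half vertices of the cells in column `j` form a
vertical path, and the `t`-th right-half vertices of the cells in row `j` a horizontal path. Every
vertical path is joined to every horizontal one by an edge of the `K_{c,c}` cell where they cross.
Hence the `c * m` crosses (a vertical and a horizontal path with the same label) are disjoint,
connected and pairwise adjacent, and splitting one cross into its two paths gives a complete minor
on `c * m + 1` vertices.

In a tree decomposition, the nodes whose bags meet a connected set of vertices form a subtree, and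
the subtrees of adjacent branch sets intersect. By the Helly property of subtrees of a tree, one bag
meets all `c * m + 1` disjoint branch sets, so it has at least `c * m + 1` vertices.
-/

namespace SimpleGraph

variable {V W : Type*} {G : SimpleGraph V} {r s t : Set V} {u v : V}

lemma induce_connected_iff_forall_exists_walk :
    (G.induce s).Connected ↔
      s.Nonempty ∧ ∀ u ∈ s, ∀ v ∈ s, ∃ p : G.Walk u v, ∀ x ∈ p.support, x ∈ s := by
  constructor
  · intro h
    refine ⟨?_, fun u hu v hv => ?_⟩
    · obtain ⟨⟨x, hx⟩⟩ := h.nonempty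
      exact ⟨x, hx⟩
    · obtain ⟨p⟩ := h.preconnected ⟨u, hu⟩ ⟨v, hv⟩
      have hp : ∀ {a b : s} (q : (G.induce s).Walk a b),
          ∀ x ∈ (q.map (Embedding.induce s).toHom).support, x ∈ s := by
        intro a b q x hx
        rw [Walk.support_map] at hx
        obtain ⟨⟨y, hy⟩, -, rfl⟩ := List.mem_map.mp hx
        exact hy
      exact ⟨_, hp p⟩
  · rintro ⟨⟨x, hx⟩, h⟩
    have : Nonempty s := ⟨⟨x, hx⟩⟩
    refine ⟨fun ⟨u, hu⟩ ⟨v, hv⟩ => ?_⟩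
    obtain ⟨p, hp⟩ := h u hu v hv
    exact ⟨p.induce s hp⟩

lemma exists_isPath_of_induce_connected (hs : (G.induce s).Connected) (hu : u ∈ s) (hv : v ∈ s) :
    ∃ p : G.Walk u v, p.IsPath ∧ ∀ x ∈ p.support, x ∈ s := by
  classical
  obtain ⟨p, hp⟩ := (induce_connected_iff_forall_exists_walk.mp hs).2 u hu v hv
  exact ⟨p.bypass, p.bypass_isPath, fun x hx => hp x (p.support_bypass_subset_support hx)⟩

lemma Connected.induce_range {H : SimpleGraph W} (hH : H.Connected) (f : H →g G) :
    (G.induce (Set.range f)).Connected :=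
  hH.map ⟨fun w => ⟨f w, w, rfl⟩, fun h => f.map_adj h⟩ (by rintro ⟨_, w, rfl⟩; exact ⟨w, rfl⟩)

namespace IsAcyclic

lemma support_subset_of_induce_connected (hG : G.IsAcyclic) (hs : (G.induce s).Connected)
    {p : G.Walk u v} (hp : p.IsPath) (hu : u ∈ s) (hv : v ∈ s) : ∀ x ∈ p.support, x ∈ s := by
  obtain ⟨q, hq, hqs⟩ := exists_isPath_of_induce_connected hs hu hv
  obtain rfl : p = q := congrArg Subtype.val ((hG.subsingleton_path u v).elim ⟨p, hp⟩ ⟨q, hq⟩)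
  exact hqs

lemma induce_inter_connected (hG : G.IsAcyclic) (hs : (G.induce s).Connected)
    (ht : (G.induce t).Connected) (hst : (s ∩ t).Nonempty) : (G.induce (s ∩ t)).Connected := by
  refine induce_connected_iff_forall_exists_walk.mpr ⟨hst, fun u hu v hv => ?_⟩
  obtain ⟨p, hp, hps⟩ := exists_isPath_of_induce_connected hs hu.1 hv.1
  exact ⟨p, fun x hx => ⟨hps x hx, hG.support_subset_of_induce_connected ht hp hu.2 hv.2 x hx⟩⟩

lemma inter_inter_nonempty (hG : G.IsAcyclic) (hr : (G.induce r).Connected)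
    (hs : (G.induce s).Connected) (ht : (G.induce t).Connected) {x y z : V} (hx : x ∈ r ∩ s)
    (hy : y ∈ s ∩ t) (hz : z ∈ t ∩ r) : (r ∩ s ∩ t).Nonempty := by
  classical
  by_cases hyr : y ∈ r
  · exact ⟨y, ⟨hyr, hy.1⟩, hy.2⟩
  -- The path from `z` to `y` lies in `t`, and also in `r ∪ s`, as it is the bypass of `z → x → y`.
  obtain ⟨p, -, hpr⟩ := exists_isPath_of_induce_connected hr hz.2 hx.1
  obtain ⟨q, -, hqs⟩ := exists_isPath_of_induce_connected hs hx.2 hy.1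
  set w := (p.append q).bypass
  have hwt := hG.support_subset_of_induce_connected ht (p.append q).bypass_isPath hz.1 hy.2
  have hwrs : ∀ a ∈ w.support, a ∈ r ∪ s := fun a ha => by
    have := (p.append q).support_bypass_subset_support ha
    rcases (Walk.mem_support_append_iff _ _).mp this with h | h
    exacts [Or.inl (hpr a h), Or.inr (hqs a h)]
  obtain ⟨d, hd, hdr, hdr'⟩ := w.exists_boundary_dart r hz.2 hyr
  have hfst := w.dart_fst_mem_support_of_mem_darts hd
  have hsnd := w.dart_snd_mem_support_of_mem_darts hd
  -- Of the paths from `x` to the two ends of the edge `d`, one passes through the other end.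
  obtain ⟨p', hp', hp'r⟩ := exists_isPath_of_induce_connected hr hx.1 hdr
  obtain ⟨q', hq', hq's⟩ :=
    exists_isPath_of_induce_connected hs hx.2 ((hwrs _ hsnd).resolve_left hdr')
  by_cases h : d.fst ∈ q'.support
  · exact ⟨d.fst, ⟨hdr, hq's _ h⟩, hwt _ hfst⟩
  · have := hG.mem_support_of_ne_mem_support_of_adj_of_isPath hp' hq' d.adj h
    exact ⟨d.snd, ⟨hp'r _ this, (hwrs _ hsnd).resolve_left hdr'⟩, hwt _ hsnd⟩

theorem exists_forall_mem_of_pairwise_inter_nonempty (hG : G.IsAcyclic) {ι : Type*}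
    {J : Finset ι} (hJ : J.Nonempty) {f : ι → Set V} (hf : ∀ j ∈ J, (G.induce (f j)).Connected)
    (hff : ∀ j ∈ J, ∀ k ∈ J, (f j ∩ f k).Nonempty) : ∃ x, ∀ j ∈ J, x ∈ f j := by
  induction hJ using Finset.Nonempty.cons_induction generalizing f with
  | singleton a =>
    obtain ⟨x, hx, -⟩ := hff a (Finset.mem_singleton_self a) a (Finset.mem_singleton_self a)
    exact ⟨x, fun j hj => Finset.mem_singleton.mp hj ▸ hx⟩
  | cons a J ha hJ ih =>
    -- Replace each remaining set `f j` by the subtree `f j ∩ f a`.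
    have hmem : a ∈ Finset.cons a J ha := Finset.mem_cons_self ..
    have hsub : ∀ j ∈ J, j ∈ Finset.cons a J ha := fun j hj => Finset.mem_cons_of_mem hj
    obtain ⟨x, hx⟩ := ih (f := fun j => f j ∩ f a)
      (fun j hj => hG.induce_inter_connected (hf j (hsub j hj)) (hf a hmem)
        (hff j (hsub j hj) a hmem))
      (fun j hj k hk => by
        obtain ⟨x, ⟨hxj, hxk⟩, hxa⟩ := hG.inter_inter_nonempty (hf j (hsub j hj))
          (hf k (hsub k hk)) (hf a hmem) (hff j (hsub j hj) k (hsub k hk)).some_mem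
          (hff k (hsub k hk) a hmem).some_mem (hff a hmem j (hsub j hj)).some_mem
        exact ⟨x, ⟨hxj, hxa⟩, ⟨hxk, hxa⟩⟩)
    obtain ⟨b, hb⟩ := hJ
    refine ⟨x, fun j hj => ?_⟩
    rcases Finset.mem_cons.mp hj with rfl | hj
    exacts [(hx b hb).2, (hx j hj).1]

end IsAcyclic

end SimpleGraph

namespace IsTreeDecomp

variable {V I : Type} {G : SimpleGraph V} {T : SimpleGraph I} {B : I → Finset V}

lemma induce_connected_bags_meeting (hB : IsTreeDecomp G T B) {S : Set V}
    (hS : (G.induce S).Connected) : (T.induce {i | ∃ v ∈ S, v ∈ B i}).Connected := by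
  obtain ⟨-, hcover, hedge, hbags⟩ := hB
  obtain ⟨⟨v, hv⟩, hSwalk⟩ := induce_connected_iff_forall_exists_walk.mp hS
  refine induce_connected_iff_forall_exists_walk.mpr ⟨(hcover v).imp fun i hi => ⟨v, hv, hi⟩, ?_⟩
  rintro i₁ ⟨v₁, hv₁, hi₁⟩ i₂ ⟨v₂, hv₂, hi₂⟩
  obtain ⟨w, hw⟩ := hSwalk v₁ hv₁ v₂ hv₂
  clear hv₁ hv₂
  -- Follow the walk `w`, moving between bags through the subtree of the current vertex.
  induction w generalizing i₁ with
  | nil =>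
    obtain ⟨p, -, hp⟩ := exists_isPath_of_induce_connected (hbags _) hi₁ hi₂
    exact ⟨p, fun i hi => ⟨_, hw _ (Walk.start_mem_support _), hp i hi⟩⟩
  | cons h w ih =>
    obtain ⟨i, hi, hi'⟩ := hedge _ _ h
    obtain ⟨p, -, hp⟩ := exists_isPath_of_induce_connected (hbags _) hi₁ hi
    obtain ⟨q, hq⟩ := ih i hi' hi₂ (fun x hx => hw x (List.mem_cons_of_mem _ hx))
    refine ⟨p.append q, fun j hj => ?_⟩
    rcases (Walk.mem_support_append_iff _ _).mp hj with hj | hj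
    · exact ⟨_, hw _ (Walk.start_mem_support _), hp j hj⟩
    · exact hq j hj

theorem exists_card_le_card_bag_of_isMinor {ι : Type} [Fintype ι] [Nonempty ι]
    (hB : IsTreeDecomp G T B) (h : IsMinor (⊤ : SimpleGraph ι) G) :
    ∃ i, Fintype.card ι ≤ (B i).card := by
  obtain ⟨φ, hconn, hdisj, hadj⟩ := h
  have ⟨hT, hcover, hedge, _⟩ := hB
  have hmeet : ∀ j k, ({i | ∃ v ∈ φ j, v ∈ B i} ∩ {i | ∃ v ∈ φ k, v ∈ B i}).Nonempty := by
    intro j k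
    obtain rfl | hjk := eq_or_ne j k
    · obtain ⟨⟨v, hv⟩⟩ := (hconn j).nonempty
      obtain ⟨i, hi⟩ := hcover v
      exact ⟨i, ⟨v, hv, hi⟩, ⟨v, hv, hi⟩⟩
    · obtain ⟨a, ha, b, hb, hab⟩ := hadj j k hjk
      obtain ⟨i, hai, hbi⟩ := hedge a b hab
      exact ⟨i, ⟨a, ha, hai⟩, ⟨b, hb, hbi⟩⟩
  obtain ⟨i, hi⟩ := hT.isAcyclic.exists_forall_mem_of_pairwise_inter_nonempty
    Finset.univ_nonempty (fun j _ => hB.induce_connected_bags_meeting (hconn j))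
    (fun j _ k _ => hmeet j k)
  choose v hvφ hvB using fun j => hi j (Finset.mem_univ j)
  refine ⟨i, ?_⟩
  have hinj : Function.Injective fun j => (⟨v j, hvB j⟩ : B i) := by
    intro j k hjk
    by_contra hne
    have hjk : v j = v k := congrArg Subtype.val hjk
    exact Set.disjoint_left.mp (hdisj j k hne) (hvφ j) (hjk ▸ hvφ k)
  simpa using Fintype.card_le_of_injective _ hinj

end IsTreeDecomp

lemma isTreeDecomp_bot_univ {V : Type} [Fintype V] (G : SimpleGraph V) :
    IsTreeDecomp G (⊥ : SimpleGraph Unit) fun _ => Finset.univ :=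
  ⟨.of_subsingleton, fun _ => ⟨(), Finset.mem_univ _⟩,
    fun _ _ _ => ⟨(), Finset.mem_univ _, Finset.mem_univ _⟩,
    fun v => (@IsTree.of_subsingleton _ ⟨⟨(), Finset.mem_univ v⟩⟩ _ _).connected⟩

theorem card_le_treewidth_add_one_of_isMinor {V ι : Type} [Fintype V] [Fintype ι]
    {G : SimpleGraph V} (h : IsMinor (⊤ : SimpleGraph ι) G) :
    Fintype.card ι ≤ treewidth G + 1 := by
  cases isEmpty_or_nonempty ι
  · simp
  obtain ⟨I, T, B, hB, hcard⟩ := Nat.sInf_mem (s := {k | ∃ (I : Type) (T : SimpleGraph I)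
    (B : I → Finset V), IsTreeDecomp G T B ∧ ∀ i, (B i).card ≤ k + 1})
    ⟨Fintype.card V, Unit, ⊥, _, isTreeDecomp_bot_univ G, fun _ => by simp⟩
  obtain ⟨i, hi⟩ := hB.exists_card_le_card_bag_of_isMinor h
  exact hi.trans (hcard i)

namespace hardwareGraph

variable {m c : ℕ}

def leftIndex (t : Fin c) : Fin (2 * c) := ⟨t, by omega⟩

def rightIndex (t : Fin c) : Fin (2 * c) := ⟨c + t, by omega⟩

def column (p : Fin m × Fin c) : Set (Fin m × Fin m × Fin (2 * c)) :=
  Set.range fun a => (a, p.1, leftIndex p.2)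

def row (p : Fin m × Fin c) : Set (Fin m × Fin m × Fin (2 * c)) :=
  Set.range fun b => (p.1, b, rightIndex p.2)

lemma adj_left_right (a b : Fin m) (t t' : Fin c) :
    (hardwareGraph m c).Adj (a, b, leftIndex t) (a, b, rightIndex t') :=
  (fromRel_adj _ _ _).mpr
    ⟨ne_of_apply_ne (fun x => (x.2.2 : ℕ)) (by dsimp [leftIndex, rightIndex]; omega),
      .inl (.inl ⟨rfl, rfl, t.2, Nat.le_add_right c t'⟩)⟩

lemma adj_down {a a' : Fin m} (h : (a : ℕ) + 1 = a') (b : Fin m) (t : Fin c) :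
    (hardwareGraph m c).Adj (a, b, leftIndex t) (a', b, leftIndex t) :=
  (fromRel_adj _ _ _).mpr ⟨ne_of_apply_ne (fun x => (x.1 : ℕ)) (by dsimp only; omega),
    .inl (.inr (.inl ⟨rfl, rfl, t.2, h⟩))⟩

lemma adj_right (a : Fin m) {b b' : Fin m} (h : (b : ℕ) + 1 = b') (t : Fin c) :
    (hardwareGraph m c).Adj (a, b, rightIndex t) (a, b', rightIndex t) :=
  (fromRel_adj _ _ _).mpr ⟨ne_of_apply_ne (fun x => (x.2.1 : ℕ)) (by dsimp only; omega),
    .inl (.inr (.inr ⟨rfl, rfl, Nat.le_add_right c t, h⟩))⟩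

lemma induce_column_connected (p : Fin m × Fin c) :
    ((hardwareGraph m c).induce (column p)).Connected :=
  have : Nonempty (Fin m) := ⟨p.1⟩
  Connected.induce_range ⟨pathGraph_preconnected m⟩
    ⟨_, fun h => (pathGraph_adj.mp h).elim (adj_down · _ _) fun h => (adj_down h _ _).symm⟩

lemma induce_row_connected (p : Fin m × Fin c) :
    ((hardwareGraph m c).induce (row p)).Connected :=
  have : Nonempty (Fin m) := ⟨p.1⟩
  Connected.induce_range ⟨pathGraph_preconnected m⟩
    ⟨_, fun h => (pathGraph_adj.mp h).elim (adj_right _ · _) fun h => (adj_right _ h _).symm⟩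

/-- Column `p` crosses row `p'` in the cell `(p'.1, p.1)`. -/
lemma exists_adj_column_row (p p' : Fin m × Fin c) :
    ∃ x ∈ column p, ∃ y ∈ row p', (hardwareGraph m c).Adj x y :=
  ⟨_, ⟨p'.1, rfl⟩, _, ⟨p.1, rfl⟩, adj_left_right _ _ _ _⟩

lemma induce_column_union_row_connected (p p' : Fin m × Fin c) :
    ((hardwareGraph m c).induce (column p ∪ row p')).Connected :=
  have ⟨_, hx, _, hy, hxy⟩ := exists_adj_column_row p p'
  connected_induce_union (induce_column_connected p).preconnected
    (induce_row_connected p').preconnected hx hy hxy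

lemma disjoint_column_row (p p' : Fin m × Fin c) : Disjoint (column p) (row p') := by
  refine Set.disjoint_left.mpr ?_
  rintro _ ⟨a, rfl⟩ ⟨b, h⟩
  simp only [rightIndex, leftIndex, Prod.mk.injEq, Fin.ext_iff] at h
  omega

lemma disjoint_column {p p' : Fin m × Fin c} (h : p ≠ p') : Disjoint (column p) (column p') := by
  refine Set.disjoint_left.mpr ?_
  rintro _ ⟨a, rfl⟩ ⟨a', h'⟩
  simp only [leftIndex, Prod.mk.injEq, Fin.ext_iff] at h'
  exact h (Prod.ext (Fin.ext (by omega)) (Fin.ext (by omega)))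

lemma disjoint_row {p p' : Fin m × Fin c} (h : p ≠ p') : Disjoint (row p) (row p') := by
  refine Set.disjoint_left.mpr ?_
  rintro _ ⟨b, rfl⟩ ⟨b', h'⟩
  simp only [rightIndex, Prod.mk.injEq, Fin.ext_iff, Nat.add_left_cancel_iff] at h'
  exact h (Prod.ext (Fin.ext (by omega)) (Fin.ext (by omega)))

lemma exists_adj_of_column_subset_of_row_subset {p p' : Fin m × Fin c}
    {s t : Set (Fin m × Fin m × Fin (2 * c))} (hs : column p ⊆ s) (ht : row p' ⊆ t) :
    (∃ x ∈ s, ∃ y ∈ t, (hardwareGraph m c).Adj x y) ∧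
      ∃ x ∈ t, ∃ y ∈ s, (hardwareGraph m c).Adj x y :=
  have ⟨x, hx, y, hy, hxy⟩ := exists_adj_column_row p p'
  ⟨⟨x, hs hx, y, ht hy, hxy⟩, ⟨y, ht hy, x, hs hx, hxy.symm⟩⟩

def branchSet (q : Fin m × Fin c) : Option (Fin m × Fin c) → Set (Fin m × Fin m × Fin (2 * c))
  | none => row q
  | some p => if p = q then column p else column p ∪ row p

variable {q : Fin m × Fin c}

lemma column_subset_branchSet (p : Fin m × Fin c) : column p ⊆ branchSet q (some p) := by
  simp only [branchSet]
  split_ifs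
  exacts [subset_rfl, Set.subset_union_left]

lemma row_subset_branchSet {p : Fin m × Fin c} (h : p ≠ q) : row p ⊆ branchSet q (some p) := by
  simp only [branchSet, if_neg h, Set.subset_union_right]

lemma branchSet_some_subset (p : Fin m × Fin c) : branchSet q (some p) ⊆ column p ∪ row p := by
  simp only [branchSet]
  split_ifs
  exacts [Set.subset_union_left, subset_rfl]

lemma induce_branchSet_connected (o : Option (Fin m × Fin c)) :
    ((hardwareGraph m c).induce (branchSet q o)).Connected := by
  rcases o with _ | p
  · exact induce_row_connected q
  · by_cases h : p = q
    · rw [branchSet, if_pos h]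
      exact induce_column_connected p
    · rw [branchSet, if_neg h]
      exact induce_column_union_row_connected p p

lemma disjoint_branchSet_none_some (p : Fin m × Fin c) :
    Disjoint (branchSet q none) (branchSet q (some p)) := by
  simp only [branchSet]
  split_ifs with h
  · exact (disjoint_column_row p q).symm
  · exact Disjoint.union_right (disjoint_column_row p q).symm (disjoint_row (Ne.symm h))

lemma disjoint_branchSet_some_some {p p' : Fin m × Fin c} (h : p ≠ p') :
    Disjoint (branchSet q (some p)) (branchSet q (some p')) := by
  refine Disjoint.mono (branchSet_some_subset p) (branchSet_some_subset p') ?_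
  exact Disjoint.union_left (.union_right (disjoint_column h) (disjoint_column_row p p'))
    (.union_right (disjoint_column_row p' p).symm (disjoint_row h))

theorem isMinor_top (q : Fin m × Fin c) :
    IsMinor (⊤ : SimpleGraph (Option (Fin m × Fin c))) (hardwareGraph m c) := by
  refine ⟨branchSet q, induce_branchSet_connected, ?_, ?_⟩
  · rintro (_ | p) (_ | p') hne
    · exact absurd rfl hne
    · exact disjoint_branchSet_none_some p'
    · exact (disjoint_branchSet_none_some p).symm
    · exact disjoint_branchSet_some_some fun h => hne (congrArg some h)
  · rintro (_ | p) (_ | p') hne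
    · exact absurd rfl hne
    · exact (exists_adj_of_column_subset_of_row_subset (column_subset_branchSet p')
        (subset_refl (row q))).2
    · exact (exists_adj_of_column_subset_of_row_subset (column_subset_branchSet p)
        (subset_refl (row q))).1
    · have hpp' : p ≠ p' := fun h => hne (congrArg some h)
      by_cases hp : p = q
      · exact (exists_adj_of_column_subset_of_row_subset (column_subset_branchSet p)
          (row_subset_branchSet (hp ▸ hpp'.symm))).1
      · exact (exists_adj_of_column_subset_of_row_subset (column_subset_branchSet p')
          (row_subset_branchSet hp)).2

end hardwareGraph

/-- For every `m ≥ 1` and `c ≥ 1`, the treewidth of the hardware graph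
`F(m, c)` is at least `c * m`. -/
theorem le_treewidth_hardwareGraph (m c : ℕ) (hm : 1 ≤ m) (hc : 1 ≤ c) :
    c * m ≤ treewidth (hardwareGraph m c) := by
  have h := card_le_treewidth_add_one_of_isMinor (hardwareGraph.isMinor_top (⟨0, hm⟩, ⟨0, hc⟩))
  rw [Fintype.card_option, Fintype.card_prod, Fintype.card_fin, Fintype.card_fin] at h
  rw [mul_comm]
  omega
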